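/- arXiv:2405.21053 — 2 statements merged into one kernel-verified Lean document; each statement's English description precedes it below -/
import Mathlib

section
/- Let Q_n be the quiver with vertices 0, 1, ..., n and an edge from i to j whenever j - i is odd and j - i ≥ 3. Let p_m denote the number of paths from 0 to m. Then p_m satisfies p_{m+2} = p_m + p_{m-1} with p_0 = 1, p_1 = p_2 = 0, and the dimension of the path algebra kQ_n equals Σ_{m=0}^n p_m (n - m + 1). -/
/-- There is an edge from `a` to `b` in the quiver of mixed Tate motives over `ℤ`
iff `b - a` is odd and `≥ 3`. -/
def MTStep (a b : ℕ) : Prop := a < b ∧ Odd (b - a) ∧ 3 ≤ b - a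

/-- A path from `i` to `j`: the list of visited vertices, starting at `i` and ending at `j`,
with each consecutive pair an edge.  (The trivial path at `i` is `[i]`.) -/
def MTPath (i j : ℕ) : Type :=
  { l : List ℕ // l.Chain' MTStep ∧ l.head? = some i ∧ l.getLast? = some j }

/-- The set of all paths of the quiver `Q_n` (vertices `0, 1, ..., n`). -/
def MTPathIn (n : ℕ) : Type :=
  { l : List ℕ // l.Chain' MTStep ∧ l ≠ [] ∧ ∀ v ∈ l, v ≤ n }

/-
Paths of `Q_n` are strictly increasing lists of vertices, hence finitely many sublists of
`[0, …, n]`. Removing the last edge of a path from `0` to `m ≥ 1` gives `p m = ∑ p a` over the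
predecessors `a` of `m`; the predecessors of `m + 2` are those of `m` together with `m - 1`, which
is the recurrence. Translating by `i` identifies paths from `i` to `j` with paths from `0` to
`j - i`, so sorting the paths of `Q_n` by their endpoints `i ≤ j ≤ n` counts them as
`∑_{j ≤ n} ∑_{m ≤ j} p m = ∑_m (n - m + 1) p m`.
-/

theorem List.Pairwise.le_of_head?_eq_some {α : Type*} [Preorder α] {l : List α} {a x : α}
    (hl : l.Pairwise (· ≤ ·)) (ha : l.head? = some a) (hx : x ∈ l) : a ≤ x := by
  obtain ⟨l, rfl⟩ := List.head?_eq_some_iff.mp ha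
  rcases List.mem_cons.mp hx with rfl | hx
  · exact le_rfl
  · exact List.rel_of_pairwise_cons hl hx

theorem List.Pairwise.le_of_getLast?_eq_some {α : Type*} [Preorder α] {l : List α} {a x : α}
    (hl : l.Pairwise (· ≤ ·)) (ha : l.getLast? = some a) (hx : x ∈ l) : x ≤ a := by
  obtain ⟨l, rfl⟩ := List.getLast?_eq_some_iff.mp ha
  rcases List.mem_append.mp hx with hx | hx
  · exact (List.pairwise_append.mp hl).2.2 _ hx _ (List.mem_singleton_self _)
  · rw [List.mem_singleton.mp hx]

theorem List.sublist_range_of_pairwise_lt {l : List ℕ} {n : ℕ} (hl : l.Pairwise (· < ·))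
    (hn : ∀ v ∈ l, v < n) : l.Sublist (List.range n) :=
  List.sublist_of_subperm_of_pairwise
    (List.subperm_of_subset hl.nodup fun v hv => List.mem_range.mpr (hn v hv)) hl
    List.pairwise_lt_range

open Finset

theorem Finset.sum_range_sum_range_succ_eq_sum_nsmul {M : Type*} [AddCommMonoid M] (f : ℕ → M)
    (n : ℕ) :
    ∑ j ∈ range (n + 1), ∑ m ∈ range (j + 1), f m = ∑ m ∈ range (n + 1), (n - m + 1) • f m := by
  rw [sum_comm' (t' := range (n + 1)) (s' := fun m => Ico m (n + 1))]
  · refine sum_congr rfl fun m hm => ?_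
    rw [sum_const, Nat.card_Ico]
    have := mem_range.mp hm
    congr 1
    omega
  · intro j m
    simp only [mem_range, mem_Ico]
    omega

namespace MTQuiver

instance : DecidableRel MTStep := fun _ _ => inferInstanceAs (Decidable (_ ∧ _ ∧ _))

theorem mtStep_add_add_iff {a b : ℕ} (i : ℕ) : MTStep (a + i) (b + i) ↔ MTStep a b := by
  simp only [MTStep, Nat.add_sub_add_right, add_lt_add_iff_right]

theorem pairwise_lt_of_isChain {l : List ℕ} (hl : l.IsChain MTStep) : l.Pairwise (· < ·) :=
  List.isChain_iff_pairwise.mp (hl.imp fun _ _ => And.left)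

def pathsIn (n : ℕ) : Finset (List ℕ) :=
  {l ∈ (List.range (n + 1)).sublists.toFinset | l.IsChain MTStep ∧ l ≠ []}

theorem mem_pathsIn {n : ℕ} {l : List ℕ} :
    l ∈ pathsIn n ↔ l.IsChain MTStep ∧ l ≠ [] ∧ ∀ v ∈ l, v ≤ n := by
  simp only [pathsIn, mem_filter, List.mem_toFinset, List.mem_sublists]
  refine ⟨fun ⟨hsub, hl, hne⟩ => ⟨hl, hne, fun v hv => ?_⟩,
    fun ⟨hl, hne, hn⟩ => ⟨?_, hl, hne⟩⟩
  · exact Nat.lt_succ_iff.mp (List.mem_range.mp (hsub.subset hv))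
  · exact List.sublist_range_of_pairwise_lt (pairwise_lt_of_isChain hl)
      fun v hv => Nat.lt_succ_of_le (hn v hv)

def paths (i j : ℕ) : Finset (List ℕ) :=
  {l ∈ pathsIn j | l.head? = some i ∧ l.getLast? = some j}

theorem mem_paths {i j : ℕ} {l : List ℕ} :
    l ∈ paths i j ↔ l.IsChain MTStep ∧ l.head? = some i ∧ l.getLast? = some j := by
  simp only [paths, mem_filter, mem_pathsIn]
  refine ⟨fun ⟨⟨hl, _⟩, hi, hj⟩ => ⟨hl, hi, hj⟩, fun ⟨hl, hi, hj⟩ => ⟨⟨hl, ?_, ?_⟩, hi, hj⟩⟩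
  · rintro rfl
    simp at hi
  · exact fun v hv => (pairwise_lt_of_isChain hl).imp le_of_lt |>.le_of_getLast?_eq_some hj hv

theorem le_of_mem_paths {i j v : ℕ} {l : List ℕ} (hl : l ∈ paths i j) (hv : v ∈ l) :
    i ≤ v ∧ v ≤ j := by
  obtain ⟨hc, hi, hj⟩ := mem_paths.mp hl
  have hle := (pairwise_lt_of_isChain hc).imp le_of_lt
  exact ⟨hle.le_of_head?_eq_some hi hv, hle.le_of_getLast?_eq_some hj hv⟩

theorem ne_nil_of_mem_paths {i j : ℕ} {l : List ℕ} (hl : l ∈ paths i j) : l ≠ [] := by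
  rintro rfl
  simp [mem_paths] at hl

theorem paths_self (i : ℕ) : paths i i = {[i]} := by
  ext l
  rw [mem_singleton]
  refine ⟨fun hl => ?_, ?_⟩
  · obtain ⟨hc, hi, -⟩ := mem_paths.mp hl
    obtain ⟨_ | ⟨b, t⟩, rfl⟩ := List.head?_eq_some_iff.mp hi
    · rfl
    · have hib : i < b := List.rel_of_pairwise_cons (pairwise_lt_of_isChain hc) (by simp)
      have hbi : b ≤ i := (le_of_mem_paths hl (by simp)).2
      omega
  · rintro rfl
    exact mem_paths.mpr ⟨List.isChain_singleton i, rfl, rfl⟩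

def predecessors (j : ℕ) : Finset ℕ := {a ∈ range j | MTStep a j}

theorem predecessors_one : predecessors 1 = ∅ := by decide

theorem predecessors_two : predecessors 2 = ∅ := by decide

theorem sum_predecessors_add_two {M : Type*} [AddCommMonoid M] (f : ℕ → M) {m : ℕ} (hm : 1 ≤ m) :
    ∑ a ∈ predecessors (m + 2), f a = f (m - 1) + ∑ a ∈ predecessors m, f a := by
  have h : predecessors (m + 2) = insert (m - 1) (predecessors m) := by
    ext a
    simp only [predecessors, mem_insert, mem_filter, mem_range, MTStep, Nat.odd_iff]
    omega
  rw [h, sum_insert]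
  simp only [predecessors, mem_filter, mem_range, MTStep, Nat.odd_iff]
  omega

theorem append_singleton_mem_paths_iff {i j : ℕ} {l : List ℕ} (hl : l ≠ []) :
    l ++ [j] ∈ paths i j ↔ ∃ a ∈ predecessors j, l ∈ paths i a := by
  obtain ⟨a, ha⟩ : ∃ a, l.getLast? = some a := ⟨_, List.getLast?_eq_some_getLast hl⟩
  simp only [mem_paths, List.isChain_append, List.head?_append_of_ne_nil _ hl, ha,
    List.getLast?_concat, predecessors, mem_filter, mem_range, List.isChain_singleton,
    List.head?_cons, Option.mem_def, Option.some_inj, forall_eq', true_and, and_true]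
  exact ⟨fun ⟨⟨hc, hs⟩, hi⟩ => ⟨a, ⟨hs.1, hs⟩, hc, hi, rfl⟩,
    fun ⟨_, ⟨_, hs⟩, hc, hi, ha⟩ => ⟨⟨hc, ha ▸ hs⟩, hi⟩⟩

theorem paths_eq_biUnion_predecessors {i j : ℕ} (hij : i < j) :
    paths i j = (predecessors j).biUnion fun a => (paths i a).image (· ++ [j]) := by
  ext l
  simp only [mem_biUnion, mem_image]
  refine ⟨fun hl => ?_, fun ⟨a, ha, l', hl', hl⟩ => ?_⟩
  · obtain ⟨l', rfl⟩ := List.getLast?_eq_some_iff.mp (mem_paths.mp hl).2.2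
    have hl' : l' ≠ [] := by
      rintro rfl
      have := (mem_paths.mp hl).2.1
      simp only [List.nil_append, List.head?_cons, Option.some_inj] at this
      omega
    obtain ⟨a, ha, hl'⟩ := (append_singleton_mem_paths_iff hl').mp hl
    exact ⟨a, ha, l', hl', rfl⟩
  · exact hl ▸ (append_singleton_mem_paths_iff (ne_nil_of_mem_paths hl')).mpr ⟨a, ha, hl'⟩

theorem card_paths_of_lt {i j : ℕ} (hij : i < j) :
    #(paths i j) = ∑ a ∈ predecessors j, #(paths i a) := by
  rw [paths_eq_biUnion_predecessors hij, card_biUnion]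
  · exact sum_congr rfl fun a _ => card_image_of_injective _ (List.append_left_injective [j])
  · intro a _ b _ hab
    simp only [Function.onFun, disjoint_left, mem_image]
    rintro _ ⟨l, hl, rfl⟩ ⟨l', hl', hll'⟩
    rw [List.append_left_injective [j] hll'] at hl'
    exact hab (Option.some_injective _ ((mem_paths.mp hl).2.2.symm.trans (mem_paths.mp hl').2.2))

theorem map_add_mem_paths_iff {i j : ℕ} {l : List ℕ} (k : ℕ) :
    l.map (· + k) ∈ paths (i + k) (j + k) ↔ l ∈ paths i j := by
  simp only [mem_paths, List.isChain_map, mtStep_add_add_iff, List.head?_map, List.getLast?_map,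
    Option.map_eq_some_iff, add_left_inj, exists_eq_right]

theorem paths_add (i d : ℕ) : paths i (i + d) = (paths 0 d).image (List.map (· + i)) := by
  ext l
  rw [mem_image]
  refine ⟨fun hl => ?_, fun ⟨l', hl', hl⟩ => ?_⟩
  · have hsub : (l.map (· - i)).map (· + i) = l := by
      rw [List.map_map]
      exact (List.map_congr_left fun v hv => Nat.sub_add_cancel (le_of_mem_paths hl hv).1).trans
        (List.map_id l)
    refine ⟨l.map (· - i), ?_, hsub⟩
    rwa [← map_add_mem_paths_iff i, hsub, zero_add, add_comm d]
  · have h := (map_add_mem_paths_iff (i := 0) (j := d) i).mpr hl'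
    rwa [zero_add, add_comm d, hl] at h

theorem card_paths_add (i d : ℕ) : #(paths i (i + d)) = #(paths 0 d) := by
  rw [paths_add, card_image_of_injective _ (List.map_injective_iff.mpr (add_left_injective i))]

theorem pathsIn_eq_biUnion (n : ℕ) :
    pathsIn n = (range (n + 1)).biUnion fun j => (range (j + 1)).biUnion fun i => paths i j := by
  ext l
  simp only [mem_biUnion, mem_range, Nat.lt_succ_iff, mem_pathsIn]
  refine ⟨fun ⟨hc, hne, hn⟩ => ?_, fun ⟨j, hjn, i, hij, hl⟩ => ?_⟩
  · have hl : l ∈ paths (l.head hne) (l.getLast hne) :=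
      mem_paths.mpr ⟨hc, List.head?_eq_some_head hne, List.getLast?_eq_some_getLast hne⟩
    exact ⟨_, hn _ (List.getLast_mem hne), _, (le_of_mem_paths hl (List.head_mem hne)).2, hl⟩
  · exact ⟨(mem_paths.mp hl).1, ne_nil_of_mem_paths hl,
      fun v hv => (le_of_mem_paths hl hv).2.trans hjn⟩

theorem card_pathsIn_eq_sum_sum (n : ℕ) :
    #(pathsIn n) = ∑ j ∈ range (n + 1), ∑ i ∈ range (j + 1), #(paths i j) := by
  rw [pathsIn_eq_biUnion, card_biUnion]
  · refine sum_congr rfl fun j _ => card_biUnion fun i _ i' _ hii' => ?_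
    simp only [Function.onFun, disjoint_left, mem_paths]
    exact fun l ⟨_, hi, _⟩ ⟨_, hi', _⟩ => hii' (Option.some_injective _ (hi.symm.trans hi'))
  · intro j _ j' _ hjj'
    simp only [Function.onFun, disjoint_left, mem_biUnion, mem_paths]
    exact fun l ⟨_, _, _, _, hj⟩ ⟨_, _, _, _, hj'⟩ =>
      hjj' (Option.some_injective _ (hj.symm.trans hj'))

theorem card_pathsIn (n : ℕ) :
    #(pathsIn n) = ∑ j ∈ range (n + 1), ∑ m ∈ range (j + 1), #(paths 0 m) := by
  rw [card_pathsIn_eq_sum_sum]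
  refine sum_congr rfl fun j _ => ?_
  rw [← sum_range_reflect]
  refine sum_congr rfl fun i hi => ?_
  have hij : j + 1 - 1 - i + i = j := by
    have := mem_range.mp hi
    omega
  rw [← card_paths_add (j + 1 - 1 - i) i, hij]

theorem card_mtPath (i j : ℕ) : Nat.card (MTPath i j) = #(paths i j) :=
  Nat.subtype_card _ fun _ => mem_paths

theorem card_mtPathIn (n : ℕ) : Nat.card (MTPathIn n) = #(pathsIn n) :=
  Nat.subtype_card _ fun _ => mem_pathsIn

end MTQuiver

open MTQuiver in
/-- Let `Q_n` be the quiver with vertices `0, ..., n` and an edge from `i`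
to `j` whenever `j - i` is odd and `≥ 3`, and let `p m` be the number of paths from `0` to `m`.
Then `p` satisfies `p (m+2) = p m + p (m-1)` (for `m ≥ 1`) with `p 0 = 1`, `p 1 = p 2 = 0`,
and the dimension of the path algebra `k Q_n` — which equals the total number of paths
in `Q_n` — is `∑_{m=0}^{n} p m * (n - m + 1)`. -/
theorem stmt18 (p : ℕ → ℕ) (hp : ∀ m, p m = Nat.card (MTPath 0 m)) (n : ℕ) :
    (p 0 = 1 ∧ p 1 = 0 ∧ p 2 = 0 ∧ ∀ m : ℕ, 1 ≤ m → p (m + 2) = p m + p (m - 1)) ∧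
    Nat.card (MTPathIn n) = ∑ m ∈ Finset.range (n + 1), p m * (n - m + 1) := by
  have hp' (m : ℕ) : p m = #(paths 0 m) := (hp m).trans (card_mtPath 0 m)
  have hrec {m : ℕ} (hm : 1 ≤ m) : p m = ∑ a ∈ predecessors m, p a := by
    simp only [hp', card_paths_of_lt hm]
  refine ⟨⟨?_, ?_, ?_, fun m hm => ?_⟩, ?_⟩
  · rw [hp', paths_self, card_singleton]
  · rw [hrec le_rfl, predecessors_one, sum_empty]
  · rw [hrec one_le_two, predecessors_two, sum_empty]
  · rw [hrec (by omega : 1 ≤ m + 2), sum_predecessors_add_two _ hm, ← hrec hm, add_comm]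
  · rw [card_mtPathIn, card_pathsIn, sum_range_sum_range_succ_eq_sum_nsmul]
    exact sum_congr rfl fun m _ => by rw [smul_eq_mul, mul_comm, hp']
end

section
/- Let p_m be the number of paths from 0 to m in a quiver with vertices the nonnegative integers and e_s edges from i to i+s for each s ≥ 1, where e_s depends only on s. Then p_0 = 1 and p_m = Σ_{i=0}^{m-1} p_i e_{m-i} for all m ≥ 1. If moreover e_1 = r_1 + r_2 + |S| - 1, e_m = r_2 for even m ≥ 2, and e_m = r_1 + r_2 for odd m ≥ 3, then p_m = e_1 p_{m-1} + (r_2 + 1) p_{m-2} + (1 - |S|) p_{m-3} for m ≥ 3. -/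
/-!
Splitting a path off its first edge, of length `m - i` for some `i < m`, leaves a path to `i`;
this gives the convolution recurrence. When `e (k + 2) = e k` for `k ≥ 2`, the sums for `p m`
and `p (m - 2)` agree term by term for `i < m - 3`, so their difference only involves
`p (m - 1)`, `p (m - 2)` and `p (m - 3)`, which is the three-term recurrence.
-/

/-- A path from `0` to `m` in the quiver with vertices `ℕ` and `e s` edges from `i` to `i + s`
(for each `s ≥ 1`): it is encoded as the list of its successive edges, each edge being a pair
`(s, t)` where `s ≥ 1` is the length of the step and `t < e s` labels which of the `e s`
parallel edges is used.  The sources/targets are determined by the condition that the steps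
sum to `m`, starting from `0`. -/
def LabelledPath (e : ℕ → ℕ) (m : ℕ) : Type :=
  { l : List (ℕ × ℕ) // (∀ x ∈ l, 1 ≤ x.1 ∧ x.2 < e x.1) ∧ (l.map Prod.fst).sum = m }

namespace LabelledPath

variable {e : ℕ → ℕ}

instance : Unique (LabelledPath e 0) where
  default := ⟨[], by simp⟩
  uniq := by
    rintro ⟨_ | ⟨x, l⟩, hedge, hsum⟩
    · rfl
    · have := (hedge x List.mem_cons_self).1
      simp only [List.map_cons, List.sum_cons] at hsum
      omega

def consEdge {m : ℕ} (x : Σ i : Fin m, Fin (e (m - i)) × LabelledPath e i) :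
    LabelledPath e m :=
  ⟨(m - x.1, x.2.1) :: x.2.2.1, by
    refine ⟨fun y hy => ?_, ?_⟩
    · rcases List.mem_cons.1 hy with rfl | hy
      · exact ⟨by have := x.1.2; omega, x.2.1.2⟩
      · exact x.2.2.2.1 y hy
    · simp only [List.map_cons, List.sum_cons, x.2.2.2.2]
      have := x.1.2
      omega⟩

theorem consEdge_injective {m : ℕ} : Function.Injective (consEdge (e := e) (m := m)) := by
  rintro ⟨⟨i, hi⟩, ⟨t, ht⟩, ⟨l, hl⟩⟩ ⟨⟨i', hi'⟩, ⟨t', ht'⟩, ⟨l', hl'⟩⟩ h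
  obtain ⟨⟨hlen, rfl⟩, rfl⟩ := by simpa [consEdge] using congrArg Subtype.val h
  obtain rfl : i = i' := by omega
  rfl

theorem consEdge_surjective {m : ℕ} (hm : 1 ≤ m) :
    Function.Surjective (consEdge (e := e) (m := m)) := by
  rintro ⟨_ | ⟨x, l⟩, hedge, hsum⟩
  · simp at hsum
    omega
  · simp only [List.map_cons, List.sum_cons] at hsum
    have hx := hedge x List.mem_cons_self
    have hlen : m - (l.map Prod.fst).sum = x.1 := by omega
    refine ⟨⟨⟨(l.map Prod.fst).sum, by omega⟩, ⟨x.2, hlen ▸ hx.2⟩,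
      ⟨l, fun y hy => hedge y (List.mem_cons_of_mem _ hy), rfl⟩⟩, ?_⟩
    exact Subtype.ext (by simp [consEdge, hlen])

noncomputable def equivSigma {m : ℕ} (hm : 1 ≤ m) :
    (Σ i : Fin m, Fin (e (m - i)) × LabelledPath e i) ≃ LabelledPath e m :=
  Equiv.ofBijective consEdge ⟨consEdge_injective, consEdge_surjective hm⟩

instance (m : ℕ) : Finite (LabelledPath e m) := by
  induction m using Nat.strong_induction_on with
  | _ m ih =>
    rcases Nat.eq_zero_or_pos m with rfl | hm
    · infer_instance
    · have : ∀ i : Fin m, Finite (LabelledPath e i) := fun i => ih i i.2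
      exact Finite.of_equiv _ (equivSigma hm)

theorem card_eq_sum {m : ℕ} (hm : 1 ≤ m) :
    Nat.card (LabelledPath e m) =
      ∑ i ∈ Finset.range m, Nat.card (LabelledPath e i) * e (m - i) := by
  rw [← Nat.card_congr (equivSigma hm), Nat.card_sigma, ← Fin.sum_univ_eq_sum_range]
  simp only [Nat.card_prod, Nat.card_eq_fintype_card, Fintype.card_fin, Nat.mul_comm]

end LabelledPath

theorem add_three_eq_of_sum_mul_of_periodic {R : Type*} [CommRing R] {p e : ℕ → R}
    (hrec : ∀ m, 1 ≤ m → p m = ∑ i ∈ Finset.range m, p i * e (m - i))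
    (hper : ∀ k, 2 ≤ k → e (k + 2) = e k) (n : ℕ) :
    p (n + 3) = e 1 * p (n + 2) + (e 2 + 1) * p (n + 1) + (e 3 - e 1) * p n := by
  have hsum : ∑ i ∈ Finset.range n, p i * e (n + 3 - i)
      = ∑ i ∈ Finset.range n, p i * e (n + 1 - i) := by
    refine Finset.sum_congr rfl fun i hi => ?_
    have hi : i < n := Finset.mem_range.mp hi
    rw [show n + 3 - i = n + 1 - i + 2 by omega, hper _ (by omega)]
  have h3 := hrec (n + 3) (by omega)
  have h1 := hrec (n + 1) (by omega)
  simp only [Finset.sum_range_succ, hsum, Nat.add_sub_cancel_left,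
    show n + 3 - (n + 2) = 1 by omega, show n + 3 - (n + 1) = 2 by omega,
    show n + 1 - n = 1 by omega] at h3 h1
  linear_combination h3 - h1

/-- Let `p m` be the number of paths from `0` to `m` in a quiver with
vertices the nonnegative integers and `e s` edges from `i` to `i+s`.  Then `p 0 = 1` and
`p m = ∑_{i=0}^{m-1} p i * e (m-i)` for `m ≥ 1`.  If moreover
`e 1 = r₁ + r₂ + |S| - 1`, `e m = r₂` for even `m ≥ 2` and `e m = r₁ + r₂` for odd `m ≥ 3`,
then `p m = e 1 * p (m-1) + (r₂ + 1) * p (m-2) + (1 - |S|) * p (m-3)` for `m ≥ 3`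
(an identity of integers). -/
theorem stmt19 (e : ℕ → ℕ) (p : ℕ → ℕ) (hp : ∀ m, p m = Nat.card (LabelledPath e m)) :
    (p 0 = 1 ∧ ∀ m : ℕ, 1 ≤ m → p m = ∑ i ∈ Finset.range m, p i * e (m - i)) ∧
    (∀ r₁ r₂ s : ℕ,
      (e 1 : ℤ) = (r₁ : ℤ) + r₂ + s - 1 →
      (∀ m : ℕ, 2 ≤ m → Even m → e m = r₂) →
      (∀ m : ℕ, 3 ≤ m → Odd m → e m = r₁ + r₂) →
      ∀ m : ℕ, 3 ≤ m →
        (p m : ℤ) = (e 1 : ℤ) * p (m - 1) + ((r₂ : ℤ) + 1) * p (m - 2)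
          + (1 - (s : ℤ)) * p (m - 3)) := by
  have hrec : ∀ m : ℕ, 1 ≤ m → p m = ∑ i ∈ Finset.range m, p i * e (m - i) := by
    simpa only [hp] using fun m => LabelledPath.card_eq_sum (e := e) (m := m)
  refine ⟨⟨by rw [hp, Nat.card_unique], hrec⟩, fun r₁ r₂ s he1 heven hodd m hm => ?_⟩
  have hper : ∀ k, 2 ≤ k → e (k + 2) = e k := by
    intro k hk
    rcases Nat.even_or_odd k with hk' | hk'
    · rw [heven k hk hk', heven (k + 2) (by omega) (hk'.add even_two)]
    · have : 3 ≤ k := by obtain ⟨j, rfl⟩ := hk'; omega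
      rw [hodd k this hk', hodd (k + 2) (by omega) (hk'.add_even even_two)]
  have hrecℤ : ∀ m, 1 ≤ m → (p m : ℤ) = ∑ i ∈ Finset.range m, (p i : ℤ) * e (m - i) := by
    exact_mod_cast hrec
  obtain ⟨n, rfl⟩ := Nat.exists_eq_add_of_le' hm
  have key := add_three_eq_of_sum_mul_of_periodic (e := fun k => (e k : ℤ)) hrecℤ (by exact_mod_cast hper) n
  rw [heven 2 le_rfl even_two, hodd 3 le_rfl (by decide)] at key
  simp only [show n + 3 - 1 = n + 2 by omega, show n + 3 - 2 = n + 1 by omega,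
    Nat.add_sub_cancel]
  push_cast at key
  linear_combination key - (p n : ℤ) * he1
end
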